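/- arXiv:1412.2034 — 5 statements merged into one kernel-verified Lean document; each statement's English description precedes it below -/
import Mathlib

section
/- For every finite simple graph G, the Min-start and Max-start game brush numbers differ by at most one: |bg(G) − b̂g(G)| ≤ 1. -/
open Classical

namespace BrushGame

variable {V : Type*}

/-- The number of neighbours of `x` in `G` that belong to the list `l`. -/
noncomputable def nbr [Fintype V] (G : SimpleGraph V) (x : V) (l : List V) : ℕ :=
  (Finset.univ.filter (fun u => G.Adj x u ∧ u ∈ l)).card

/-- The degree of `x` in `G`. -/
noncomputable def deg [Fintype V] (G : SimpleGraph V) (x : V) : ℕ :=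
  (Finset.univ.filter (fun u => G.Adj x u)).card

/-- `l` is a valid sequence of vertex firings starting from the brush assignment `c`:
the vertices of `l` fire in order; when a vertex fires, the number of brushes on it
(those from `c` plus one from each previously fired neighbour) is at least its number of
still-dirty neighbours. -/
def FiringSeq [Fintype V] (G : SimpleGraph V) (c : V → ℕ) (l : List V) : Prop :=
  l.Nodup ∧ ∀ i : Fin l.length,
    deg G (l.get i) ≤ c (l.get i) + 2 * nbr G (l.get i) (l.take i.1)

/-- Vertex `v` gets cleaned, starting from the assignment `c` of brushes. -/
def Cleaned [Fintype V] (G : SimpleGraph V) (c : V → ℕ) (v : V) : Prop :=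
  ∃ l, FiringSeq G c l ∧ v ∈ l

/-- All vertices are clean, i.e. the game is over. -/
def Over [Fintype V] (G : SimpleGraph V) (c : V → ℕ) : Prop := ∀ v, Cleaned G c v

/-- An upper bound on the number of turns of any brushing game on `G` (plus one). -/
noncomputable def fuel [Fintype V] (G : SimpleGraph V) : ℕ := (∑ v, deg G v) + 1

/-- The value (number of brushes placed from now on, under optimal play) of the brushing
game on `G` from the brush assignment `c`, with `n` turns of fuel remaining;
`mover = true` means that it is Min's turn to place a brush (on a dirty vertex),
`mover = false` that it is Max's turn.  The fuel never runs out along legal play when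
the game is started with fuel `fuel G`. -/
noncomputable def val [Fintype V] (G : SimpleGraph V) : Bool → ℕ → (V → ℕ) → ℕ
  | _, 0, _ => 0
  | mover, n + 1, c =>
    if Over G c then 0
    else if mover then
      1 + sInf {k | ∃ v, ¬ Cleaned G c v ∧ k = val G false n (Function.update c v (c v + 1))}
    else
      1 + sSup {k | ∃ v, ¬ Cleaned G c v ∧ k = val G true n (Function.update c v (c v + 1))}

/-- The game brush number of `G` starting from the initial configuration `f`, Min to move. -/
noncomputable def bgFrom [Fintype V] (G : SimpleGraph V) (f : V → ℕ) : ℕ :=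
  val G true (fuel G) f

/-- The game brush number of `G` starting from the initial configuration `f`, Max to move. -/
noncomputable def bghatFrom [Fintype V] (G : SimpleGraph V) (f : V → ℕ) : ℕ :=
  val G false (fuel G) f

/-- The (Min-start) game brush number of `G`. -/
noncomputable def bg [Fintype V] (G : SimpleGraph V) : ℕ := bgFrom G (fun _ => 0)

/-- The Max-start game brush number of `G`. -/
noncomputable def bghat [Fintype V] (G : SimpleGraph V) : ℕ := bghatFrom G (fun _ => 0)

/-- `G` can be cleaned by the configuration `f`. -/
def CleansBy [Fintype V] (G : SimpleGraph V) (f : V → ℕ) : Prop :=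
  ∃ l, FiringSeq G f l ∧ ∀ v : V, v ∈ l

/-- The brush number of `G`. -/
noncomputable def bNum [Fintype V] (G : SimpleGraph V) : ℕ :=
  sInf {k | ∃ f, CleansBy G f ∧ k = ∑ v, f v}

end BrushGame

/-!
Placing a brush never raises the value of the remaining game. The key point is that a brush
put on a vertex that is already clean changes nothing: a firing sequence for the larger
configuration can be appended, minus repetitions, to one that cleans that vertex. So if Min's
preferred vertex has become clean in a configuration with more brushes, any other move of
Min is at least as good, and monotonicity follows by induction on the remaining number of turns.

Consequently, after the first brush of either player the value is at most that of the game
with no brush placed and the other player to move, which gives `bg ≤ b̂g + 1` and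
`b̂g ≤ bg + 1`; the turn bound built into `val` is handled by monotonicity in that bound.
-/

namespace BrushGame

variable {V : Type*}

lemma update_eq_add_single (c : V → ℕ) (v : V) :
    Function.update c v (c v + 1) = c + Pi.single v 1 := by
  ext x
  by_cases hx : x = v <;> simp [hx]

variable [Fintype V] {G : SimpleGraph V}

lemma nbr_mono {x : V} {l₁ l₂ : List V} (h : ∀ y ∈ l₁, y ∈ l₂) :
    nbr G x l₁ ≤ nbr G x l₂ :=
  Finset.card_le_card fun _ hu => by
    simp only [Finset.mem_filter] at hu ⊢
    exact ⟨hu.1, hu.2.1, h _ hu.2.2⟩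

lemma firingSeq_iff {c : V → ℕ} {l : List V} :
    FiringSeq G c l ↔
      l.Nodup ∧ ∀ i (hi : i < l.length), deg G l[i] ≤ c l[i] + 2 * nbr G l[i] (l.take i) :=
  and_congr_right fun _ => ⟨fun h i hi => h ⟨i, hi⟩, fun h i => h i.1 i.2⟩

lemma firingSeq_concat_iff {c : V → ℕ} {l : List V} {x : V} :
    FiringSeq G c (l ++ [x]) ↔
      FiringSeq G c l ∧ x ∉ l ∧ deg G x ≤ c x + 2 * nbr G x l := by
  simp only [firingSeq_iff, List.nodup_append, List.nodup_singleton, List.mem_singleton]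
  constructor
  · rintro ⟨⟨hnd, -, hdisj⟩, h⟩
    refine ⟨⟨hnd, fun i hi => ?_⟩, fun hx => hdisj x hx x rfl rfl, ?_⟩
    · have := h i (by simp; omega)
      rwa [List.getElem_append_left hi, List.take_append_of_le_length hi.le] at this
    · simpa using h l.length (by simp)
  · rintro ⟨⟨hnd, h⟩, hxl, hx⟩
    refine ⟨⟨hnd, trivial, by rintro y hy _ rfl rfl; exact hxl hy⟩, fun i hi => ?_⟩
    rcases Nat.lt_succ_iff_lt_or_eq.1 (by simpa using hi) with hi | rfl
    · simpa [List.getElem_append_left hi, List.take_append_of_le_length hi.le] using h i hi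
    · simpa using hx

lemma FiringSeq.mono {c c' : V → ℕ} {l : List V} (hl : FiringSeq G c l) (h : c ≤ c') :
    FiringSeq G c' l :=
  ⟨hl.1, fun i => (hl.2 i).trans (Nat.add_le_add_right (h _) _)⟩

lemma FiringSeq.append_filter {c c' : V → ℕ} {l l' : List V}
    (hl : FiringSeq G c l) (hl' : FiringSeq G c' l') (hc : ∀ x ∈ l', x ∉ l → c' x ≤ c x) :
    FiringSeq G c (l ++ l'.filter (· ∉ l)) := by
  induction l' using List.reverseRecOn with
  | nil => simpa using hl
  | append_singleton l' x ih =>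
    obtain ⟨hl', hxl', hx⟩ := firingSeq_concat_iff.1 hl'
    have ih := ih hl' fun y hy => hc y (List.mem_append_left _ hy)
    by_cases hxl : x ∈ l
    · simpa [List.filter_append, hxl] using ih
    have hsub : ∀ y ∈ l', y ∈ l ++ l'.filter (· ∉ l) := fun y hy => by
      by_cases hyl : y ∈ l <;> simp [hyl, hy]
    rw [List.filter_append, List.filter_singleton, decide_eq_true hxl, cond_true,
      ← List.append_assoc, firingSeq_concat_iff]
    refine ⟨ih, by simp [hxl, hxl'], ?_⟩
    calc deg G x ≤ c' x + 2 * nbr G x l' := hx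
      _ ≤ c x + 2 * nbr G x (l ++ l'.filter (· ∉ l)) :=
        Nat.add_le_add (hc x (by simp) hxl) (Nat.mul_le_mul_left 2 (nbr_mono hsub))

lemma Cleaned.mono {c c' : V → ℕ} {v : V} (hv : Cleaned G c v) (h : c ≤ c') :
    Cleaned G c' v :=
  let ⟨l, hl, hvl⟩ := hv; ⟨l, hl.mono h, hvl⟩

lemma Over.mono {c c' : V → ℕ} (ho : Over G c) (h : c ≤ c') : Over G c' :=
  fun v => (ho v).mono h

lemma cleaned_add_single_iff {c : V → ℕ} {v : V} (hv : Cleaned G c v) (u : V) :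
    Cleaned G (c + Pi.single v 1) u ↔ Cleaned G c u := by
  refine ⟨fun ⟨l', hl', hul'⟩ => ?_, fun hu => hu.mono le_self_add⟩
  obtain ⟨l, hl, hvl⟩ := hv
  refine ⟨_, hl.append_filter hl' fun x _ hxl => ?_, ?_⟩
  · have hxv : x ≠ v := fun h => hxl (h ▸ hvl)
    simp [hxv]
  · by_cases hul : u ∈ l <;> simp [hul, hul']

lemma over_add_single_iff {c : V → ℕ} {v : V} (hv : Cleaned G c v) :
    Over G (c + Pi.single v 1) ↔ Over G c :=
  forall_congr' (cleaned_add_single_iff hv)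

lemma val_zero (m : Bool) (c : V → ℕ) : val G m 0 c = 0 := by
  rw [val]

lemma val_succ (m : Bool) (n : ℕ) (c : V → ℕ) :
    val G m (n + 1) c =
      if Over G c then 0
      else if m then
        1 + sInf ((fun v => val G false n (c + Pi.single v 1)) '' {v | ¬ Cleaned G c v})
      else 1 + sSup ((fun v => val G true n (c + Pi.single v 1)) '' {v | ¬ Cleaned G c v}) := by
  rw [val]
  simp only [update_eq_add_single, Set.image, Set.mem_ofPred_eq, eq_comm]

lemma nonempty_dirty {c : V → ℕ} (ho : ¬ Over G c) : {v | ¬ Cleaned G c v}.Nonempty :=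
  not_forall.1 ho

lemma val_succ_of_over {c : V → ℕ} (ho : Over G c) (m : Bool) (n : ℕ) :
    val G m (n + 1) c = 0 := by
  rw [val_succ, if_pos ho]

lemma val_true_succ_le {c : V → ℕ} {v : V} (hv : ¬ Cleaned G c v) (n : ℕ) :
    val G true (n + 1) c ≤ 1 + val G false n (c + Pi.single v 1) := by
  rw [val_succ, if_neg fun ho => hv (ho v), if_pos rfl]
  gcongr
  exact Nat.sInf_le ⟨v, hv, rfl⟩

lemma exists_val_true_succ_eq {c : V → ℕ} (ho : ¬ Over G c) (n : ℕ) :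
    ∃ v, ¬ Cleaned G c v ∧ val G true (n + 1) c = 1 + val G false n (c + Pi.single v 1) := by
  rw [val_succ, if_neg ho, if_pos rfl]
  obtain ⟨v, hv, hmin⟩ := Nat.sInf_mem <|
    (nonempty_dirty ho).image fun v => val G false n (c + Pi.single v 1)
  exact ⟨v, hv, by rw [← hmin]⟩

lemma le_val_false_succ {c : V → ℕ} {v : V} (hv : ¬ Cleaned G c v) (n : ℕ) :
    1 + val G true n (c + Pi.single v 1) ≤ val G false (n + 1) c := by
  rw [val_succ, if_neg fun ho => hv (ho v), if_neg Bool.false_ne_true]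
  gcongr
  exact le_csSup (Set.toFinite _).bddAbove ⟨v, hv, rfl⟩

lemma exists_val_false_succ_eq {c : V → ℕ} (ho : ¬ Over G c) (n : ℕ) :
    ∃ v, ¬ Cleaned G c v ∧ val G false (n + 1) c = 1 + val G true n (c + Pi.single v 1) := by
  rw [val_succ, if_neg ho, if_neg Bool.false_ne_true]
  obtain ⟨v, hv, hmax⟩ := Set.Nonempty.csSup_mem
    ((nonempty_dirty ho).image fun v => val G true n (c + Pi.single v 1)) (Set.toFinite _)
  exact ⟨v, hv, by rw [← hmax]⟩

lemma val_add_single_of_cleaned {c : V → ℕ} {v : V} (hv : Cleaned G c v) (m : Bool) (n : ℕ) :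
    val G m n (c + Pi.single v 1) = val G m n c := by
  induction n generalizing m c v with
  | zero => rw [val_zero, val_zero]
  | succ n ih =>
    have hdirty : {w | ¬ Cleaned G (c + Pi.single v 1) w} = {w | ¬ Cleaned G c w} := by
      ext w
      simp only [cleaned_add_single_iff hv]
    have hmove (m' : Bool) : ∀ w ∈ {w | ¬ Cleaned G c w},
        val G m' n (c + Pi.single v 1 + Pi.single w 1) = val G m' n (c + Pi.single w 1) :=
      fun w _ => by rw [add_right_comm]; exact ih (hv.mono le_self_add) m'
    rw [val_succ, val_succ, over_add_single_iff hv, hdirty, Set.image_congr (hmove false),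
      Set.image_congr (hmove true)]

theorem val_antitone (m : Bool) (n : ℕ) : Antitone (val G m n) := by
  induction n generalizing m with
  | zero => intro c c' _; rw [val_zero, val_zero]
  | succ n ih =>
    intro c c' h
    by_cases ho' : Over G c'
    · rw [val_succ_of_over ho']
      exact Nat.zero_le _
    have ho : ¬ Over G c := fun ho => ho' (ho.mono h)
    cases m
    · obtain ⟨w, hw, hval⟩ := exists_val_false_succ_eq ho' n
      calc val G false (n + 1) c' = 1 + val G true n (c' + Pi.single w 1) := hval
        _ ≤ 1 + val G true n (c + Pi.single w 1) := by gcongr; exact ih true (add_le_add_left h _)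
        _ ≤ val G false (n + 1) c := le_val_false_succ (fun hc => hw (hc.mono h)) n
    · obtain ⟨w, hw, hval⟩ := exists_val_true_succ_eq ho n
      have hstep : val G false n (c' + Pi.single w 1) ≤ val G false n (c + Pi.single w 1) :=
        ih false (add_le_add_left h _)
      rw [hval]
      by_cases hw' : Cleaned G c' w
      · -- `w` is no longer available to Min, but any dirty `u` does at least as well
        obtain ⟨u, hu⟩ := nonempty_dirty ho'
        calc val G true (n + 1) c'
            ≤ 1 + val G false n (c' + Pi.single u 1) := val_true_succ_le hu n
          _ ≤ 1 + val G false n c' := by gcongr; exact ih false le_self_add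
          _ = 1 + val G false n (c' + Pi.single w 1) := by rw [val_add_single_of_cleaned hw']
          _ ≤ 1 + val G false n (c + Pi.single w 1) := by gcongr
      · exact (val_true_succ_le hw' n).trans (by gcongr)

lemma val_le_val_succ (m : Bool) (n : ℕ) (c : V → ℕ) : val G m n c ≤ val G m (n + 1) c := by
  induction n generalizing m c with
  | zero => rw [val_zero]; exact Nat.zero_le _
  | succ n ih =>
    by_cases ho : Over G c
    · rw [val_succ_of_over ho]
      exact Nat.zero_le _
    cases m
    · obtain ⟨w, hw, hval⟩ := exists_val_false_succ_eq ho n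
      calc val G false (n + 1) c = 1 + val G true n (c + Pi.single w 1) := hval
        _ ≤ 1 + val G true (n + 1) (c + Pi.single w 1) := by gcongr; exact ih _ _
        _ ≤ val G false (n + 2) c := le_val_false_succ hw _
    · obtain ⟨w, hw, hval⟩ := exists_val_true_succ_eq ho (n + 1)
      calc val G true (n + 1) c ≤ 1 + val G false n (c + Pi.single w 1) := val_true_succ_le hw n
        _ ≤ 1 + val G false (n + 1) (c + Pi.single w 1) := by gcongr; exact ih _ _
        _ = val G true (n + 2) c := hval.symm

lemma val_succ_le_val_not (m : Bool) (n : ℕ) (c : V → ℕ) :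
    val G m (n + 1) c ≤ val G (!m) n c + 1 := by
  by_cases ho : Over G c
  · rw [val_succ_of_over ho]
    exact Nat.zero_le _
  cases m
  · obtain ⟨w, hw, hval⟩ := exists_val_false_succ_eq ho n
    have := val_antitone (G := G) true n (le_self_add : c ≤ c + Pi.single w 1)
    rw [hval, Bool.not_false]
    omega
  · obtain ⟨u, hu⟩ := nonempty_dirty ho
    have := val_antitone (G := G) false n (le_self_add : c ≤ c + Pi.single u 1)
    have := val_true_succ_le hu n
    rw [Bool.not_true]
    omega

lemma val_le_val_not_add_one (m : Bool) (n : ℕ) (c : V → ℕ) :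
    val G m n c ≤ val G (!m) n c + 1 := by
  cases n with
  | zero => rw [val_zero]; exact Nat.zero_le _
  | succ n => exact (val_succ_le_val_not m n c).trans (by gcongr; exact val_le_val_succ _ n c)

end BrushGame

/-- For every finite simple graph `G`, the Min-start and Max-start game
brush numbers differ by at most one. -/
theorem game_brush_number_min_max_diff_le_one {V : Type*} [Fintype V] (G : SimpleGraph V) :
    |(BrushGame.bg G : ℤ) - (BrushGame.bghat G : ℤ)| ≤ 1 := by
  have h₁ : BrushGame.bg G ≤ BrushGame.bghat G + 1 :=
    BrushGame.val_le_val_not_add_one true _ _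
  have h₂ : BrushGame.bghat G ≤ BrushGame.bg G + 1 :=
    BrushGame.val_le_val_not_add_one false _ _
  rw [abs_le]
  constructor <;> omega
end

section
/- For every integer n ≥ 3, the cycle C_n satisfies bg(C_n) = 3 and b̂g(C_n) = 2. -/
open Classical

/-- The cycle graph on `Fin n`: `a` is adjacent to `b` iff they are distinct and
consecutive modulo `n`. -/
def cycleG (n : ℕ) : SimpleGraph (Fin n) :=
  SimpleGraph.fromRel (fun a b => ((a : ℕ) + 1) % n = (b : ℕ))

/-!
On a cycle every vertex has degree two, so the first vertex to fire needs two brushes of its own;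
conversely, once some vertex holds two brushes the cleaning sweeps around the cycle, each vertex
being fired by the brush of its predecessor. Hence the game ends exactly when some vertex receives
its second brush. If Min starts, Max answers Min's first brush on a fresh vertex and the game
lasts three moves; if Max starts, Min doubles up on Max's vertex and it lasts two.
-/

namespace BrushGame

variable {V : Type*} [Fintype V] {G : SimpleGraph V}

theorem deg_eq_degree [G.LocallyFinite] (x : V) : deg G x = G.degree x := by
  rw [deg, ← SimpleGraph.card_neighborFinset_eq_degree]
  congr 1
  ext u
  simp

theorem nbr_nil (x : V) : nbr G x [] = 0 := by
  simp [nbr]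

theorem exists_deg_le_of_cleaned {c : V → ℕ} {v : V} (h : Cleaned G c v) :
    ∃ w, deg G w ≤ c w := by
  obtain ⟨l, ⟨-, hfire⟩, hv⟩ := h
  have hl : 0 < l.length := List.length_pos_of_mem hv
  refine ⟨l.get ⟨0, hl⟩, ?_⟩
  simpa [nbr_nil] using hfire ⟨0, hl⟩

theorem firingSeq_of_isChain {c : V → ℕ} {l : List V} (hnd : l.Nodup)
    (hchain : l.IsChain G.Adj) (hdeg : ∀ x ∈ l, deg G x ≤ 2)
    (hhead : ∀ x ∈ l.head?, deg G x ≤ c x) : FiringSeq G c l := by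
  refine ⟨hnd, fun ⟨i, hi⟩ => ?_⟩
  cases i with
  | zero => simpa [nbr_nil] using hhead l[0] (by simp [List.head?_eq_getElem?])
  | succ k =>
    have hprev : G.Adj l[k + 1] l[k] := (hchain.getElem k hi).symm
    have hmem : l[k] ∈ l.take (k + 1) := List.mem_take_iff_getElem.mpr ⟨k, by omega, rfl⟩
    have hnbr : 1 ≤ nbr G l[k + 1] (l.take (k + 1)) :=
      Finset.card_pos.mpr ⟨l[k], by simp [hprev, hmem]⟩
    have := hdeg _ (List.getElem_mem hi)
    simp only [List.get_eq_getElem]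
    omega

theorem val_of_over {b : Bool} {m : ℕ} {c : V → ℕ} (h : Over G c) : val G b m c = 0 := by
  cases m <;> simp [val, h]

theorem val_true_succ_eq {m a : ℕ} {c : V → ℕ} (h : ¬Over G c)
    (hopt : ∃ v, ¬Cleaned G c v ∧ val G false m (Function.update c v (c v + 1)) = a)
    (hbound : ∀ v, ¬Cleaned G c v → a ≤ val G false m (Function.update c v (c v + 1))) :
    val G true (m + 1) c = 1 + a := by
  simp only [val, h, if_false, if_true]
  congr 1
  refine IsLeast.csInf_eq ⟨?_, ?_⟩
  · obtain ⟨v, hv, hva⟩ := hopt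
    exact ⟨v, hv, hva.symm⟩
  · rintro k ⟨v, hv, rfl⟩
    exact hbound v hv

theorem val_false_succ_eq {m a : ℕ} {c : V → ℕ} (h : ¬Over G c)
    (hopt : ∃ v, ¬Cleaned G c v ∧ val G true m (Function.update c v (c v + 1)) = a)
    (hbound : ∀ v, ¬Cleaned G c v → val G true m (Function.update c v (c v + 1)) ≤ a) :
    val G false (m + 1) c = 1 + a := by
  simp only [val, h, if_false, Bool.false_eq_true]
  congr 1
  refine IsGreatest.csSup_eq ⟨?_, ?_⟩
  · obtain ⟨v, hv, hva⟩ := hopt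
    exact ⟨v, hv, hva.symm⟩
  · rintro k ⟨v, hv, rfl⟩
    exact hbound v hv

theorem not_cleaned_of_le_one (hG : ∀ c v, Cleaned G c v ↔ ∃ w, 2 ≤ c w) {c : V → ℕ}
    (hc : ∀ w, c w ≤ 1) (v : V) : ¬Cleaned G c v := by
  rw [hG]
  exact fun ⟨w, hw⟩ => by have := hc w; omega

theorem over_of_two_le (hG : ∀ c v, Cleaned G c v ↔ ∃ w, 2 ≤ c w) {c : V → ℕ} {w : V}
    (hw : 2 ≤ c w) : Over G c :=
  fun v => (hG c v).2 ⟨w, hw⟩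

theorem val_true_eq_one (hG : ∀ c v, Cleaned G c v ↔ ∃ w, 2 ≤ c w) {m : ℕ} {c : V → ℕ}
    (hc : ∀ w, c w ≤ 1) {v : V} (hv : c v = 1) : val G true (m + 1) c = 1 := by
  have hdirty := not_cleaned_of_le_one hG hc
  refine val_true_succ_eq (fun h => hdirty v (h v)) ⟨v, hdirty v, ?_⟩ fun _ _ => Nat.zero_le _
  exact val_of_over (over_of_two_le hG (w := v) (by simp [hv]))

theorem val_false_eq_two (hG : ∀ c v, Cleaned G c v ↔ ∃ w, 2 ≤ c w) {m : ℕ} {c : V → ℕ}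
    (hc : ∀ w, c w ≤ 1) {u v : V} (hu : c u = 0) (hv : c v = 1) : val G false (m + 2) c = 2 := by
  have hdirty := not_cleaned_of_le_one hG hc
  have hmove : ∀ x, c x = 0 → val G true (m + 1) (Function.update c x (c x + 1)) = 1 := by
    intro x hx
    have hxv : v ≠ x := by rintro rfl; omega
    refine val_true_eq_one hG (fun w => ?_) (v := v) (by simp [hxv, hv])
    rcases eq_or_ne w x with rfl | hwx
    · simp [hx]
    · simp [hwx, hc w]
  refine val_false_succ_eq (fun h => hdirty v (h v)) ⟨u, hdirty u, hmove u hu⟩ fun x _ => ?_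
  rcases Nat.le_one_iff_eq_zero_or_eq_one.mp (hc x) with hx | hx
  · exact (hmove x hx).le
  · rw [val_of_over (over_of_two_le hG (w := x) (by simp [hx]))]
    exact zero_le_one

theorem val_true_zero (hG : ∀ c v, Cleaned G c v ↔ ∃ w, 2 ≤ c w) [Nontrivial V] {m : ℕ} :
    val G true (m + 3) 0 = 3 := by
  have hdirty := not_cleaned_of_le_one hG (c := 0) fun _ => zero_le_one
  have hmove : ∀ x, val G false (m + 2) (Function.update 0 x 1) = 2 := by
    intro x
    obtain ⟨u, hux⟩ := exists_ne x
    refine val_false_eq_two hG (fun w => ?_) (u := u) (v := x) (by simp [hux]) (by simp)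
    rcases eq_or_ne w x with rfl | hwx <;> simp [*]
  obtain ⟨x₀⟩ : Nonempty V := inferInstance
  exact val_true_succ_eq (fun h => hdirty x₀ (h x₀)) ⟨x₀, hdirty x₀, hmove x₀⟩
    fun x _ => (hmove x).ge

theorem val_false_zero (hG : ∀ c v, Cleaned G c v ↔ ∃ w, 2 ≤ c w) [Nonempty V] {m : ℕ} :
    val G false (m + 2) 0 = 2 := by
  have hdirty := not_cleaned_of_le_one hG (c := 0) fun _ => zero_le_one
  have hmove : ∀ x, val G true (m + 1) (Function.update 0 x 1) = 1 := by
    intro x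
    refine val_true_eq_one hG (fun w => ?_) (v := x) (by simp)
    rcases eq_or_ne w x with rfl | hwx <;> simp [*]
  obtain ⟨x₀⟩ : Nonempty V := inferInstance
  exact val_false_succ_eq (fun h => hdirty x₀ (h x₀)) ⟨x₀, hdirty x₀, hmove x₀⟩
    fun x _ => (hmove x).le

end BrushGame

open SimpleGraph

theorem cycleG_eq_cycleGraph (n : ℕ) : cycleG n = cycleGraph n := by
  ext a b
  match n with
  | 0 => exact a.elim0
  | 1 => simp [cycleG, Subsingleton.elim a b]
  | n + 2 =>
    have hsucc : ∀ x y : Fin (n + 2), ((x : ℕ) + 1) % (n + 2) = y ↔ y - x = 1 := by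
      intro x y
      rw [sub_eq_iff_eq_add', Fin.ext_iff, Fin.val_add, Fin.val_one', Nat.add_mod_mod, eq_comm]
    simp only [cycleG, fromRel_adj, hsucc, cycleGraph_adj]
    exact ⟨fun h => h.2.symm, fun h => ⟨by rintro rfl; simp at h, h.symm⟩⟩

namespace BrushGame

variable {n : ℕ}

theorem deg_cycleGraph (v : Fin (n + 3)) : deg (cycleGraph (n + 3)) v = 2 := by
  rw [deg_eq_degree, cycleGraph_degree_three_le]

theorem fuel_cycleGraph : fuel (cycleGraph (n + 3)) = 2 * (n + 3) + 1 := by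
  simp [fuel, deg_cycleGraph, mul_comm]

theorem cleaned_cycleGraph_iff (c : Fin (n + 3) → ℕ) (v : Fin (n + 3)) :
    Cleaned (cycleGraph (n + 3)) c v ↔ ∃ w, 2 ≤ c w := by
  constructor
  · exact fun h => by simpa only [deg_cycleGraph] using exists_deg_le_of_cleaned h
  · rintro ⟨w, hw⟩
    refine ⟨List.ofFn (w + ·),
      firingSeq_of_isChain ?_ ?_ (fun x _ => (deg_cycleGraph x).le) ?_, ?_⟩
    · exact List.nodup_ofFn.mpr (add_right_injective w)
    · refine List.isChain_ofFn.mpr fun i hi => ?_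
      have hstep : (⟨i + 1, hi⟩ : Fin (n + 3)) = ⟨i, by omega⟩ + 1 := by
        rw [Fin.ext_iff, Fin.val_add, Fin.val_one', Nat.add_mod_mod, Nat.mod_eq_of_lt hi]
      rw [cycleGraph_adj, hstep, ← add_assoc, add_sub_cancel_left]
      exact Or.inr rfl
    · simpa [deg_cycleGraph] using hw
    · exact List.mem_ofFn.mpr ⟨v - w, add_sub_cancel w v⟩

end BrushGame

/-- For every integer `n ≥ 3`, the cycle `C_n` satisfies
`bg(C_n) = 3` and `b̂g(C_n) = 2`. -/
theorem game_brush_number_cycle (n : ℕ) (hn : 3 ≤ n) :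
    BrushGame.bg (cycleG n) = 3 ∧ BrushGame.bghat (cycleG n) = 2 := by
  open BrushGame in
  obtain ⟨n, rfl⟩ : ∃ k, n = k + 3 := ⟨n - 3, by omega⟩
  have hG := cleaned_cycleGraph_iff (n := n)
  have hfuel : fuel (cycleGraph (n + 3)) = 2 * n + 4 + 3 := by rw [fuel_cycleGraph]; ring
  rw [cycleG_eq_cycleGraph]
  exact ⟨by rw [bg, bgFrom, hfuel]; exact val_true_zero hG,
    by rw [bghat, bghatFrom, hfuel]; exact val_false_zero hG⟩
end

section
/- For every finite simple graph G, the brush number b(G) is at least half the number of vertices of G of odd degree: 2·b(G) ≥ |{v ∈ V(G) : deg(v) is odd}|. -/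
/-!
Let v₁, …, vₙ be the firing order of a cleaning by `f` and bᵢ the number of neighbours of vᵢ
fired before it. Every edge is counted once in ∑ bᵢ, from its later endpoint, so
2 ∑ bᵢ = ∑ deg vᵢ. The firing condition deg vᵢ ≤ f vᵢ + 2 bᵢ sharpens to
deg vᵢ + 1 ≤ 2 f vᵢ + 2 bᵢ when deg vᵢ is odd (by parity if f vᵢ = 0, trivially otherwise).
Summing over i gives ∑ deg + #odd ≤ 2 ∑ f + ∑ deg.
-/

open Classical

open Finset

theorem SimpleGraph.two_mul_sum_card_adj_lt {ι : Type*} [Fintype ι] [LinearOrder ι]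
    (H : SimpleGraph ι) : 2 * ∑ i, #{j | H.Adj i j ∧ j < i} = ∑ i, #{j | H.Adj i j} := by
  have hsplit (i : ι) :
      #{j | H.Adj i j} = #{j | H.Adj i j ∧ j < i} + #{j | H.Adj i j ∧ i < j} := by
    rw [← card_union_of_disjoint (disjoint_filter.2 fun j _ h h' => h.2.asymm h'.2)]
    congr 1
    ext j
    simp only [mem_filter, mem_univ, true_and, mem_union, ← and_or_left]
    exact ⟨fun h => ⟨h, (H.ne_of_adj h).symm.lt_or_gt⟩, And.left⟩
  have hswap : ∑ i, #{j | H.Adj i j ∧ i < j} = ∑ i, #{j | H.Adj i j ∧ j < i} := by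
    simp only [card_filter]
    rw [sum_comm]
    simp only [H.adj_comm]
  rw [sum_congr rfl fun i _ => hsplit i, sum_add_distrib, hswap, two_mul]

theorem Nat.add_ite_odd_le_two_mul_add {d a b : ℕ} (h : d ≤ a + 2 * b) :
    d + (if Odd d then 1 else 0) ≤ 2 * a + 2 * b := by
  split_ifs with hd
  · obtain ⟨k, rfl⟩ := hd
    omega
  · omega

namespace BrushGame

variable {V : Type*} [Fintype V] (G : SimpleGraph V)

theorem two_mul_sum_nbr_take {l : List V} (hnd : l.Nodup) (hall : ∀ v, v ∈ l) :
    2 * ∑ i : Fin l.length, nbr G (l.get i) (l.take i) = ∑ v, deg G v := by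
  let σ := hnd.getEquivOfForallMemList l hall
  have hdeg (i : Fin l.length) : deg G (σ i) = #{j | (G.comap σ).Adj i j} :=
    card_equiv σ.symm fun u => by simp
  have hnbr (i : Fin l.length) :
      nbr G (l.get i) (l.take i) = #{j | (G.comap σ).Adj i j ∧ j < i} :=
    card_equiv σ.symm fun u => by
      simp [σ, List.mem_take_iff_idxOf_lt (hall u), ← Fin.val_fin_lt]
  rw [← σ.sum_comp, sum_congr rfl fun i _ => hdeg i, sum_congr rfl fun i _ => hnbr i]
  exact (G.comap σ).two_mul_sum_card_adj_lt

theorem CleansBy.card_odd_deg_le {f : V → ℕ} (hf : CleansBy G f) :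
    #{v | Odd (deg G v)} ≤ 2 * ∑ v, f v := by
  obtain ⟨l, ⟨hnd, hfire⟩, hall⟩ := hf
  have reindex (g : V → ℕ) : ∑ i : Fin l.length, g (l.get i) = ∑ v, g v :=
    Fintype.sum_equiv (hnd.getEquivOfForallMemList l hall) _ _ fun _ => rfl
  have hsum : ∑ i : Fin l.length, (deg G (l.get i) + if Odd (deg G (l.get i)) then 1 else 0)
      ≤ ∑ i : Fin l.length, (2 * f (l.get i) + 2 * nbr G (l.get i) (l.take i)) :=
    sum_le_sum fun i _ => Nat.add_ite_odd_le_two_mul_add (hfire i)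
  rw [sum_add_distrib, sum_add_distrib, ← mul_sum, ← mul_sum, two_mul_sum_nbr_take G hnd hall,
    reindex (deg G), reindex (fun v => if Odd (deg G v) then 1 else 0), reindex f] at hsum
  rw [card_filter]
  omega

theorem cleansBy_deg : CleansBy G (deg G) :=
  ⟨univ.toList, ⟨nodup_toList _, fun _ => Nat.le_add_right _ _⟩, fun v => mem_toList.2 (mem_univ v)⟩

theorem exists_cleansBy_sum_eq_bNum : ∃ f, CleansBy G f ∧ ∑ v, f v = bNum G := by
  obtain ⟨f, hf, hsum⟩ : bNum G ∈ {k | ∃ f, CleansBy G f ∧ k = ∑ v, f v} :=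
    Nat.sInf_mem ⟨_, deg G, cleansBy_deg G, rfl⟩
  exact ⟨f, hf, hsum.symm⟩

end BrushGame

open Classical in
/-- The brush number of a graph is at least half the number of vertices
of odd degree: `2·b(G) ≥ |{v : deg(v) odd}|`. -/
theorem brush_number_ge_half_odd_degree {V : Type*} [Fintype V] (G : SimpleGraph V) :
    (Finset.univ.filter (fun v => Odd (BrushGame.deg G v))).card ≤ 2 * BrushGame.bNum G := by
  obtain ⟨f, hf, hsum⟩ := BrushGame.exists_cleansBy_sum_eq_bNum G
  exact hsum ▸ hf.card_odd_deg_le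
end

section
/- In the k-chip-stacking game with n piles (k ≥ 1, n ≥ 1), if player 2 uses the greedy strategy, then regardless of player 1's play, no pile ever contains more than 2k·⌈log_{4/3} n + 1⌉ chips. -/
/-!
Let `n` be the number of piles and `H_s` the `s`-th harmonic number. Against the greedy player 2,
every set of `s` piles holds at most `k s (1 + H_n - H_s)` chips after each round. Indeed, if the
greedy removal hits a pile outside a set `S` of `s` piles, then, since that pile is a largest one,
`S` holds at most an `s / (s + 1)` fraction of the chips on `S` together with that pile, and the
invariant for this set of `s + 1` piles gives the bound for `S`. If it hits a pile of `S`, either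
it removes `k` chips, which compensates the at most `k` chips player 1 added to `S`, or all piles
hold fewer than `k` chips. For a single pile the invariant gives `c ≤ k H_n`, so a pile never
exceeds `k (H_n + 1) ≤ k (2 + log n)`, which is at most `2k ⌈log_{4/3} n + 1⌉`.
-/

open Finset

lemma harmonic_mono : Monotone harmonic :=
  monotone_nat_of_le_succ fun m => by
    rw [harmonic_succ]
    exact le_add_of_nonneg_right (by positivity)

lemma harmonic_add_one_le_two_mul_ceil_logb (n : ℕ) :
    (harmonic n : ℝ) + 1 ≤ 2 * ⌈Real.logb (4 / 3) n + 1⌉₊ := by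
  have hlog : Real.log n ≤ Real.logb (4 / 3) n := by
    have h43 : Real.log (4 / 3) ≤ 1 := by
      linarith [Real.log_le_sub_one_of_pos (show (0 : ℝ) < 4 / 3 by norm_num)]
    exact le_div_self (Real.log_natCast_nonneg n) (Real.log_pos (by norm_num)) h43
  have hlogb : 0 ≤ Real.logb (4 / 3) n := (Real.log_natCast_nonneg n).trans hlog
  calc (harmonic n : ℝ) + 1 ≤ 2 + Real.log n := by linarith [harmonic_le_one_add_log n]
    _ ≤ 2 * (Real.logb (4 / 3) n + 1) := by linarith
    _ ≤ 2 * ⌈Real.logb (4 / 3) n + 1⌉₊ := by gcongr; exact Nat.le_ceil _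

lemma card_add_one_mul_sum_le_card_mul_sum_insert {ι : Type*} [DecidableEq ι] {f : ι → ℕ}
    {j : ι} (hj : ∀ i, f i ≤ f j) {S : Finset ι} (hjS : j ∉ S) :
    (#S + 1) * ∑ i ∈ S, f i ≤ #S * ∑ i ∈ insert j S, f i := by
  have hS : ∑ i ∈ S, f i ≤ #S * f j := by
    simpa using sum_le_sum fun i (_ : i ∈ S) => hj i
  rw [sum_insert hjS]
  nlinarith

section Game

variable {ι : Type*} [Fintype ι]

def HarmonicBound (k : ℕ) (c : ι → ℕ) : Prop :=
  ∀ S : Finset ι, ∑ i ∈ S, (c i : ℚ) ≤ k * #S * (1 + harmonic (Fintype.card ι) - harmonic #S)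

lemma mul_card_le_harmonicBound_rhs (k : ℕ) (S : Finset ι) :
    (k * #S : ℚ) ≤ k * #S * (1 + harmonic (Fintype.card ι) - harmonic #S) := by
  have hH : harmonic #S ≤ harmonic (Fintype.card ι) := harmonic_mono (card_le_univ S)
  exact le_mul_of_one_le_right (by positivity) (by linarith)

lemma harmonicBound_zero (k : ℕ) : HarmonicBound k (0 : ι → ℕ) := fun S => by
  simpa using (mul_card_le_harmonicBound_rhs k S).trans' (by positivity)

lemma HarmonicBound.le_mul_harmonic {k : ℕ} {c : ι → ℕ} (h : HarmonicBound k c) (i : ι) :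
    (c i : ℚ) ≤ k * harmonic (Fintype.card ι) := by
  simpa using h {i}

variable [DecidableEq ι]

lemma HarmonicBound.sum_le_of_notMem {k : ℕ} {c d : ι → ℕ} {j : ι} (h : HarmonicBound k c)
    (hsum : ∀ T : Finset ι, ∑ i ∈ T, d i ≤ ∑ i ∈ T, c i + k) (hj : ∀ i, d i ≤ d j)
    {S : Finset ι} (hjS : j ∉ S) :
    ∑ i ∈ S, (d i : ℚ) ≤ k * #S * (1 + harmonic (Fintype.card ι) - harmonic #S) := by
  have hd_avg : (#S + 1 : ℚ) * ∑ i ∈ S, (d i : ℚ) ≤ #S * ∑ i ∈ insert j S, (d i : ℚ) := by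
    exact_mod_cast card_add_one_mul_sum_le_card_mul_sum_insert hj hjS
  have hins : ∑ i ∈ insert j S, (d i : ℚ) ≤ ∑ i ∈ insert j S, (c i : ℚ) + k := by
    exact_mod_cast hsum (insert j S)
  have hbound := h (insert j S)
  rw [card_insert_of_notMem hjS, harmonic_succ] at hbound
  push_cast at hbound
  set s : ℚ := (#S : ℚ)
  set H := 1 + harmonic (Fintype.card ι) - harmonic #S
  have hs : s + 1 ≠ 0 := by positivity
  have hY : ∑ i ∈ insert j S, (c i : ℚ) + k ≤ k * (s + 1) * H := by
    have : k * (s + 1) * (1 + harmonic (Fintype.card ι) - (harmonic #S + (s + 1)⁻¹)) =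
        k * (s + 1) * H - k := by
      field_simp
      ring
    linarith
  refine le_of_mul_le_mul_left ?_ (by positivity : (0 : ℚ) < s + 1)
  calc (s + 1) * ∑ i ∈ S, (d i : ℚ) ≤ s * (∑ i ∈ insert j S, (c i : ℚ) + k) :=
        hd_avg.trans (by gcongr)
    _ ≤ s * (k * (s + 1) * H) := by gcongr
    _ = (s + 1) * (k * s * H) := by ring

lemma HarmonicBound.greedy_round {k : ℕ} {c a d c' : ι → ℕ} {j : ι} (h : HarmonicBound k c)
    (ha : ∑ i, a i ≤ k) (hd : ∀ i, d i = c i + a i) (hj : ∀ i, d i ≤ d j)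
    (hc' : ∀ i, c' i = if i = j then d i - k else d i) : HarmonicBound k c' := by
  intro S
  have hsum_d : ∀ T : Finset ι, ∑ i ∈ T, d i ≤ ∑ i ∈ T, c i + k := fun T => by
    rw [sum_congr rfl fun i _ => hd i, sum_add_distrib]
    gcongr
    exact (sum_le_sum_of_subset (subset_univ T)).trans ha
  by_cases hjS : j ∈ S
  · by_cases hk : k ≤ d j
    · have hle : ∑ i ∈ S, c' i ≤ ∑ i ∈ S, c i := by
        have hsplit : ∀ f : ι → ℕ, ∑ i ∈ S, f i = ∑ i ∈ S.erase j, f i + f j :=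
          fun f => (sum_erase_add S f hjS).symm
        have hrest : ∑ i ∈ S.erase j, c' i = ∑ i ∈ S.erase j, d i :=
          sum_congr rfl fun i hi => by rw [hc', if_neg (ne_of_mem_erase hi)]
        have := hsum_d S
        rw [hsplit, hrest, hc', if_pos rfl]
        rw [hsplit d] at this
        omega
      calc ∑ i ∈ S, (c' i : ℚ) ≤ ∑ i ∈ S, (c i : ℚ) := by exact_mod_cast hle
        _ ≤ _ := h S
    · have hle : ∑ i ∈ S, c' i ≤ #S * k := by
        simpa using sum_le_sum fun i (_ : i ∈ S) =>
          show c' i ≤ k by have := hj i; rw [hc']; split_ifs <;> omega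
      calc ∑ i ∈ S, (c' i : ℚ) ≤ k * #S := by rw [mul_comm]; exact_mod_cast hle
        _ ≤ _ := mul_card_le_harmonicBound_rhs k S
  · have hS : ∑ i ∈ S, c' i = ∑ i ∈ S, d i :=
      sum_congr rfl fun i hi => by rw [hc', if_neg (ne_of_mem_of_not_mem hi hjS)]
    rw [← Nat.cast_sum, hS, Nat.cast_sum]
    exact h.sum_le_of_notMem hsum_d hj hjS

end Game

theorem chip_stacking_greedy_bound_general (k n : ℕ)
    (a : ℕ → Fin n → ℕ) (ha : ∀ t, ∑ i, a t i = k)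
    (j : ℕ → Fin n) (c d : ℕ → Fin n → ℕ)
    (hc0 : ∀ i, c 0 i = 0)
    (hd : ∀ t i, d t i = c t i + a t i)
    (hj : ∀ t i, d t i ≤ d t (j t))
    (hstep : ∀ t i, c (t + 1) i = if i = j t then d t i - k else d t i) :
    ∀ t i, c t i ≤ 2 * k * ⌈Real.logb (4 / 3) n + 1⌉₊ ∧
      d t i ≤ 2 * k * ⌈Real.logb (4 / 3) n + 1⌉₊ := by
  have hinv : ∀ t, HarmonicBound k (c t) := by
    intro t
    induction t with
    | zero => exact funext hc0 ▸ harmonicBound_zero k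
    | succ t ih => exact ih.greedy_round (ha t).le (hd t) (hj t) (hstep t)
  intro t i
  have hc : (c t i : ℝ) ≤ k * harmonic n := by
    exact_mod_cast (Fintype.card_fin n ▸ (hinv t).le_mul_harmonic i)
  have hai : (a t i : ℝ) ≤ k := by
    exact_mod_cast ha t ▸ single_le_sum (fun i _ => Nat.zero_le (a t i)) (mem_univ i)
  have hdt : (d t i : ℝ) ≤ 2 * k * ⌈Real.logb (4 / 3) n + 1⌉₊ := by
    calc (d t i : ℝ) ≤ k * (harmonic n + 1) := by rw [hd]; push_cast; linarith
      _ ≤ k * (2 * ⌈Real.logb (4 / 3) n + 1⌉₊) := by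
          gcongr; exact harmonic_add_one_le_two_mul_ceil_logb n
      _ = _ := by ring
  have hcd : c t i ≤ d t i := hd t i ▸ Nat.le_add_right _ _
  have hdt' : d t i ≤ 2 * k * ⌈Real.logb (4 / 3) n + 1⌉₊ := by exact_mod_cast hdt
  exact ⟨hcd.trans hdt', hdt'⟩

/-- In the `k`-chip-stacking game with `n` piles, if player 2 uses the
greedy strategy, then regardless of player 1's play no pile ever contains more than
`2k·⌈log_{4/3} n + 1⌉` chips.

Here `c t` is the pile configuration before round `t` (with `c 0 = 0`), in round `t`
player 1 adds the chips `a t` (totalling `k`) yielding the intermediate configuration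
`d t`, and player 2 then greedily removes `min k (d t (j t))` chips from a largest pile
`j t`, yielding `c (t+1)`. -/
theorem chip_stacking_greedy_bound (k n : ℕ) (hk : 1 ≤ k) (hn : 1 ≤ n)
    (a : ℕ → Fin n → ℕ) (ha : ∀ t, ∑ i, a t i = k)
    (j : ℕ → Fin n) (c d : ℕ → Fin n → ℕ)
    (hc0 : ∀ i, c 0 i = 0)
    (hd : ∀ t i, d t i = c t i + a t i)
    (hj : ∀ t i, d t i ≤ d t (j t))
    (hstep : ∀ t i, c (t + 1) i = if i = j t then d t i - k else d t i) :
    ∀ t i, c t i ≤ 2 * k * ⌈Real.logb (4 / 3) n + 1⌉₊ ∧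
      d t i ≤ 2 * k * ⌈Real.logb (4 / 3) n + 1⌉₊ :=
  chip_stacking_greedy_bound_general k n a ha j c d hc0 hd hj hstep
end

section
/- In the k-chip-stacking game with n piles, where k ≥ 1 and n ≥ 2, if player 2 uses the greedy strategy, then regardless of player 1's play, at no point in the game does the total number of chips in all piles exceed (n+1)·k. -/
/-! Before every round the total is at most `n·k`. If, after player 1 has added his `k` chips,
a largest pile holds at least `k` chips, player 2 removes exactly `k` and the total returns to
its old value; otherwise every pile holds fewer than `k` chips, so the total is below `n·k`
already. Player 1's move then adds only `k` more. -/

open Finset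

section RemoveChips

variable {ι : Type*} [DecidableEq ι]

def removeChips (f : ι → ℕ) (j : ι) (k : ℕ) : ι → ℕ :=
  fun i => if i = j then f i - k else f i

theorem removeChips_le (f : ι → ℕ) (j : ι) (k : ℕ) (i : ι) : removeChips f j k i ≤ f i := by
  unfold removeChips
  split_ifs <;> omega

variable [Fintype ι]

theorem sum_removeChips_add {f : ι → ℕ} {j : ι} {k : ℕ} (hk : k ≤ f j) :
    ∑ i, removeChips f j k i + k = ∑ i, f i := by
  calc ∑ i, removeChips f j k i + k
      = ∑ i, (removeChips f j k i + if i = j then k else 0) := by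
        rw [sum_add_distrib, Fintype.sum_ite_eq']
    _ = ∑ i, f i := sum_congr rfl fun i _ => by
        unfold removeChips
        split_ifs with h
        · subst h; omega
        · rfl

theorem sum_removeChips_le_of_isMax {f : ι → ℕ} {j : ι} {k : ℕ} (hj : ∀ i, f i ≤ f j)
    (hf : ∑ i, f i ≤ Fintype.card ι * k + k) :
    ∑ i, removeChips f j k i ≤ Fintype.card ι * k := by
  by_cases hk : k ≤ f j
  · have := sum_removeChips_add hk
    omega
  · calc ∑ i, removeChips f j k i
        ≤ ∑ i, f i := sum_le_sum fun i _ => removeChips_le f j k i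
      _ ≤ (univ : Finset ι).card • k := sum_le_card_nsmul _ _ _ fun i _ => (hj i).trans (by omega)
      _ = Fintype.card ι * k := by rw [card_univ, smul_eq_mul]

end RemoveChips

theorem chip_stacking_total_bound_general (k n : ℕ)
    (a : ℕ → Fin n → ℕ) (ha : ∀ t, ∑ i, a t i = k)
    (j : ℕ → Fin n) (c d : ℕ → Fin n → ℕ)
    (hc0 : ∀ i, c 0 i = 0)
    (hd : ∀ t i, d t i = c t i + a t i)
    (hj : ∀ t i, d t i ≤ d t (j t))
    (hstep : ∀ t i, c (t + 1) i = if i = j t then d t i - k else d t i) :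
    ∀ t, (∑ i, c t i) ≤ (n + 1) * k ∧ (∑ i, d t i) ≤ (n + 1) * k := by
  have sum_d : ∀ t, ∑ i, d t i = ∑ i, c t i + k := fun t => by
    simp only [hd, sum_add_distrib, ha t]
  have sum_c : ∀ t, ∑ i, c t i ≤ n * k := by
    intro t
    induction t with
    | zero => simp [hc0]
    | succ t ih =>
      have hc : c (t + 1) = removeChips (d t) (j t) k := funext (hstep t)
      simpa only [hc, Fintype.card_fin] using
        sum_removeChips_le_of_isMax (hj t) (by rw [Fintype.card_fin, sum_d t]; omega)
  intro t
  have := sum_c t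
  have := sum_d t
  rw [add_one_mul]
  omega

/-- In the `k`-chip-stacking game with `n ≥ 2` piles, if player 2 uses
the greedy strategy, then regardless of player 1's play the total number of chips in all
piles never exceeds `(n+1)·k`.

Here `c t` is the pile configuration before round `t` (with `c 0 = 0`), in round `t`
player 1 adds the chips `a t` (totalling `k`) yielding the intermediate configuration
`d t`, and player 2 then greedily removes `min k (d t (j t))` chips from a largest pile
`j t`, yielding `c (t+1)`. -/
theorem chip_stacking_total_bound (k n : ℕ) (hk : 1 ≤ k) (hn : 2 ≤ n)
    (a : ℕ → Fin n → ℕ) (ha : ∀ t, ∑ i, a t i = k)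
    (j : ℕ → Fin n) (c d : ℕ → Fin n → ℕ)
    (hc0 : ∀ i, c 0 i = 0)
    (hd : ∀ t i, d t i = c t i + a t i)
    (hj : ∀ t i, d t i ≤ d t (j t))
    (hstep : ∀ t i, c (t + 1) i = if i = j t then d t i - k else d t i) :
    ∀ t, (∑ i, c t i) ≤ (n + 1) * k ∧ (∑ i, d t i) ≤ (n + 1) * k :=
  chip_stacking_total_bound_general k n a ha j c d hc0 hd hj hstep
end
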